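/- arXiv:2505.19654 — 2 statements merged into one kernel-verified Lean document; each statement's English description precedes it below -/
import Mathlib

section
/- There is an absolute constant c > 0 such that the following holds for all sufficiently large primes p. Let λ₁ ∈ F_p, let λ₂, λ₃ ∈ F_p be such that X² + λ₂X + λ₃ is irreducible over F_p with roots ω₂, ω₃ ∈ F_{p²}, let I, J ⊆ [1, p−1] be intervals of integers with p^{3/8} ≤ |I|, |J| < p^{1/2}, and let I₀ be the set of integers in [1, p^{3/8}/4]. Then the number of tuples (x, y, x₀, y₀, x', y', x₀', y₀') ∈ I × J × I₀ × I₀ × I × J × I₀ × I₀ such that, for each μ ∈ {λ₁, ω₂, ω₃}, (x − μy)(x₀ − μy₀) = (x' − μy')(x₀' − μy₀') with all these factors nonzero, is at most exp(c · log p / log log p) · (|I||J|)². -/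
/-!
The difference of the two sides of `(x - μy)(x₀ - μy₀) = (x' - μy')(x₀' - μy₀')` is a polynomial
of degree at most 2 in `μ` over `F_p`. It vanishes at `λ₁ ∈ F_p` and at `ω₂`, a root of an
irreducible quadratic, so it is zero: `x x₀ ≡ x' x₀'` and `y y₀ ≡ y' y₀' (mod p)`. The count
therefore factors into two counts of solutions of `x s ≡ x' s' (mod p)` with `x, x'` in an
interval of length `N < p^{1/2}` and `s, s' ≤ M ≤ p^{3/8}/4`. As `N M` is much smaller than `p`,
two solutions with the same `s, s'` differ by an exact solution of `Δx s = Δx' s'` in `ℤ`, so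
the admissible `x` lie in an arithmetic progression of difference `s' / gcd(s, s')`. Summing
`N gcd(s, s') / s' + 1` over `s, s' ≤ M` with `∑ gcd(s, s') / s' ≤ M (1 + log M)²` bounds each
factor by `2 N² (1 + log p)²`, and `(1 + log p)⁴` is much smaller than
`exp (c log p / log log p)`.
-/

open Finset Polynomial

theorem Polynomial.dvd_of_aeval_eq_zero_of_irreducible {F K : Type*} [Field F] [CommRing K]
    [Nontrivial K] [Algebra F K] {q P : F[X]} (hq : Irreducible q) {ω : K}
    (hqω : aeval ω q = 0) (hPω : aeval ω P = 0) : q ∣ P := by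
  by_contra hdvd
  obtain ⟨u, v, huv⟩ := (hq.coprime_iff_not_dvd).2 hdvd
  simpa [hqω, hPω] using congrArg (aeval ω) huv

theorem Polynomial.eq_zero_of_isRoot_of_aeval_eq_zero {F K : Type*} [Field F] [CommRing K]
    [Nontrivial K] [Algebra F K] {q P : F[X]} (hq : Irreducible q) (hq1 : 1 < q.natDegree)
    (hPq : P.natDegree ≤ q.natDegree) {l : F} (hPl : P.IsRoot l) {ω : K}
    (hqω : aeval ω q = 0) (hPω : aeval ω P = 0) : P = 0 := by
  have hcop : IsCoprime q (X - C l) := by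
    refine (hq.coprime_iff_not_dvd).2 fun h => ?_
    have := natDegree_le_of_dvd h (X_sub_C_ne_zero l)
    rw [natDegree_X_sub_C] at this
    omega
  refine eq_zero_of_dvd_of_natDegree_lt
    (hcop.mul_dvd (dvd_of_aeval_eq_zero_of_irreducible hq hqω hPω) (dvd_iff_isRoot.2 hPl)) ?_
  rw [natDegree_mul hq.ne_zero (X_sub_C_ne_zero l), natDegree_X_sub_C]
  omega

theorem mul_eq_mul_of_linearForm_products_eq {F K : Type*} [Field F] [Field K] [Algebra F K]
    {a b : F} (hq : Irreducible (X ^ 2 + C a * X + C b)) {ω : K}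
    (hω : ω ^ 2 + algebraMap F K a * ω + algebraMap F K b = 0) (l : F)
    {x y x₀ y₀ x' y' x₀' y₀' : F}
    (hl : (x - l * y) * (x₀ - l * y₀) = (x' - l * y') * (x₀' - l * y₀'))
    (hω' : (algebraMap F K x - ω * algebraMap F K y) * (algebraMap F K x₀ - ω * algebraMap F K y₀) =
      (algebraMap F K x' - ω * algebraMap F K y') * (algebraMap F K x₀' - ω * algebraMap F K y₀')) :
    x * x₀ = x' * x₀' ∧ y * y₀ = y' * y₀' := by
  set P : F[X] := C (y * y₀ - y' * y₀') * X ^ 2 - C (x * y₀ + x₀ * y - (x' * y₀' + x₀' * y')) * X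
    + C (x * x₀ - x' * x₀') with hP
  have hq2 : (X ^ 2 + C a * X + C b).natDegree = 2 := by compute_degree!
  have hPdeg : P.natDegree ≤ 2 := by rw [hP]; compute_degree
  have hP0 : P = 0 := by
    refine eq_zero_of_isRoot_of_aeval_eq_zero hq (by omega) (hPdeg.trans_eq hq2.symm) (l := l)
      ?_ (ω := ω) (by simpa using hω) ?_
    · simp only [hP, IsRoot, eval_add, eval_sub, eval_mul, eval_C, eval_pow, eval_X]
      linear_combination hl
    · simp only [hP, map_add, map_sub, map_mul, aeval_C, map_pow, aeval_X]
      linear_combination hω'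
  have h0 := congrArg (coeff · 0) hP0
  have h2 := congrArg (coeff · 2) hP0
  simp only [hP, coeff_add, coeff_sub, coeff_C_mul, coeff_X_pow, coeff_X, coeff_C,
    coeff_zero] at h0 h2
  norm_num at h0 h2
  exact ⟨sub_eq_zero.1 h0, sub_eq_zero.1 h2⟩

theorem card_sub_one_mul_le_of_dvd_sub {X : Finset ℤ} {a b d : ℤ} (hab : a ≤ b) (hd : 0 < d)
    (hX : X ⊆ Icc a b) (hdvd : ∀ x ∈ X, ∀ y ∈ X, d ∣ x - y) :
    ((#X : ℤ) - 1) * d ≤ b - a := by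
  rcases X.eq_empty_or_nonempty with rfl | hne
  · simp; omega
  set m := X.min' hne
  have hmX : m ∈ X := X.min'_mem hne
  have hcard : #X ≤ #(Icc 0 ((b - a) / d)) := by
    refine card_le_card_of_injOn (fun x => (x - m) / d) (fun x hx => ?_) (fun x hx y hy hxy => ?_)
    · have hxb := (mem_Icc.1 (hX hx)).2
      have hma := (mem_Icc.1 (hX hmX)).1
      have hmx := X.min'_le x hx
      rw [coe_Icc, Set.mem_Icc]
      exact ⟨Int.ediv_nonneg (by omega) hd.le, Int.ediv_le_ediv hd (by omega)⟩
    · have hx' := Int.ediv_mul_cancel (hdvd x hx m hmX)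
      have hy' := Int.ediv_mul_cancel (hdvd y hy m hmX)
      simp only at hxy
      rw [hxy] at hx'
      omega
  have hq : 0 ≤ (b - a) / d := Int.ediv_nonneg (by omega) hd.le
  have hcardZ : (#X : ℤ) - 1 ≤ (b - a) / d := by
    have := Int.card_Icc_of_le 0 ((b - a) / d) (by omega)
    omega
  calc ((#X : ℤ) - 1) * d ≤ (b - a) / d * d := mul_le_mul_of_nonneg_right hcardZ hd.le
    _ ≤ b - a := Int.ediv_mul_le _ hd.ne'

theorem card_sub_one_mul_le_of_sub_mul_eq {S : Finset (ℤ × ℤ)} {a b s s' : ℤ} (hab : a ≤ b)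
    (hs' : 0 < s') (hS : ∀ u ∈ S, u.1 ∈ Icc a b)
    (hrel : ∀ u ∈ S, ∀ v ∈ S, (u.1 - v.1) * s = (u.2 - v.2) * s') :
    ((#S : ℤ) - 1) * s' ≤ (b - a) * Int.gcd s' s := by
  set g : ℤ := (Int.gcd s' s : ℤ)
  have hg : 0 < g := by simpa [g] using Int.gcd_pos_of_ne_zero_left s hs'.ne'
  have hinj : Set.InjOn (fun u : ℤ × ℤ => u.1 * g) S := by
    intro u hu v hv huv
    have h1 : u.1 = v.1 := mul_right_cancel₀ hg.ne' huv
    have h2 : (u.2 - v.2) * s' = 0 := by rw [← hrel u hu v hv, h1, sub_self, zero_mul]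
    exact Prod.ext h1 (by simpa [sub_eq_zero, hs'.ne'] using h2)
  rw [← card_image_of_injOn hinj]
  have key := card_sub_one_mul_le_of_dvd_sub (X := S.image fun u => u.1 * g)
    (a := a * g) (b := b * g) (by nlinarith) hs' ?_ ?_
  · linarith
  · intro x hx
    obtain ⟨u, hu, rfl⟩ := mem_image.1 hx
    have := mem_Icc.1 (hS u hu)
    exact mem_Icc.2 ⟨by nlinarith, by nlinarith⟩
  · simp only [mem_image]
    rintro _ ⟨u, hu, rfl⟩ _ ⟨v, hv, rfl⟩
    have hdvd : s' ∣ (u.1 - v.1) * s := ⟨u.2 - v.2, by rw [hrel u hu v hv]; ring⟩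
    rw [← sub_mul]
    simpa [g, Int.coe_gcd] using dvd_mul_gcd_iff_dvd_mul.2 hdvd

theorem abs_sub_mul_le_of_mem_Icc {x y s a b M : ℤ} (hx : x ∈ Icc a b) (hy : y ∈ Icc a b)
    (hs : s ∈ Icc 1 M) :
    |(x - y) * s| ≤ (b - a) * M := by
  rw [mem_Icc] at hx hy hs
  rw [abs_mul, abs_of_pos (by omega : 0 < s)]
  exact mul_le_mul (abs_sub_le_iff.2 ⟨by omega, by omega⟩) hs.2 (by omega) (by omega)

theorem card_filter_mul_eq_mul_le {p : ℕ} {a b s s' M : ℤ} (hab : a ≤ b) (hs : s ∈ Icc 1 M)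
    (hs' : s' ∈ Icc 1 M) (hp : 2 * (b - a) * M < p) :
    (#{u ∈ Icc a b ×ˢ Icc a b | (u.1 : ZMod p) * s = u.2 * s'} : ℝ) ≤
      (b - a) * Int.gcd s' s / s' + 1 := by
  have hs'Z : 0 < s' := by have := (mem_Icc.1 hs').1; omega
  have hs'pos : (0 : ℝ) < s' := by exact_mod_cast hs'Z
  set S := {u ∈ Icc a b ×ˢ Icc a b | (u.1 : ZMod p) * s = u.2 * s'}
  have key := card_sub_one_mul_le_of_sub_mul_eq (S := S) (s := s) hab hs'Z
    (fun u hu => (mem_product.1 (mem_filter.1 hu).1).1) ?_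
  · rw [div_add_one hs'pos.ne', le_div_iff₀ hs'pos]
    have : (((#S : ℝ) - 1) * s' : ℝ) ≤ (b - a) * Int.gcd s' s := by exact_mod_cast key
    linarith
  intro u hu v hv
  obtain ⟨⟨hu1, hu2⟩, hu⟩ := And.imp_left mem_product.1 (mem_filter.1 hu)
  obtain ⟨⟨hv1, hv2⟩, hv⟩ := And.imp_left mem_product.1 (mem_filter.1 hv)
  have hdvd : (p : ℤ) ∣ (u.1 - v.1) * s - (u.2 - v.2) * s' := by
    rw [← ZMod.intCast_zmod_eq_zero_iff_dvd]
    push_cast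
    linear_combination hu - hv
  have habs : |(u.1 - v.1) * s - (u.2 - v.2) * s'| < p := by
    have := abs_sub_mul_le_of_mem_Icc hu1 hv1 hs
    have := abs_sub_mul_le_of_mem_Icc hu2 hv2 hs'
    linarith [abs_sub ((u.1 - v.1) * s) ((u.2 - v.2) * s')]
  exact sub_eq_zero.1 (Int.eq_zero_of_abs_lt_dvd hdvd habs)

theorem sum_multiples_div_le_one_add_log (M g : ℕ) :
    ∑ t ∈ Icc 1 M with g ∣ t, (g : ℝ) / t ≤ 1 + Real.log M := by
  rcases Nat.eq_zero_or_pos g with rfl | hg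
  · simp only [Nat.cast_zero, zero_div, sum_const_zero]
    linarith [Real.log_natCast_nonneg M]
  refine le_trans ?_ (harmonic_le_one_add_log M)
  have hinj : Set.InjOn (· / g) ↑({t ∈ Icc 1 M | g ∣ t} : Finset ℕ) := fun t ht u hu htu => by
    rw [mem_coe, mem_filter] at ht hu
    exact (Nat.div_left_inj ht.2 hu.2).1 htu
  calc ∑ t ∈ Icc 1 M with g ∣ t, (g : ℝ) / t
      = ∑ t ∈ Icc 1 M with g ∣ t, (((t / g : ℕ) : ℝ))⁻¹ := by
        refine sum_congr rfl fun t ht => ?_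
        rw [Nat.cast_div (mem_filter.1 ht).2 (by positivity), inv_div]
    _ = ∑ b ∈ {t ∈ Icc 1 M | g ∣ t}.image (· / g), ((b : ℕ) : ℝ)⁻¹ :=
        (sum_image (f := fun b : ℕ => ((b : ℝ))⁻¹) hinj).symm
    _ ≤ ∑ b ∈ Icc 1 M, ((b : ℕ) : ℝ)⁻¹ := by
        refine sum_le_sum_of_subset_of_nonneg (fun b hb => ?_) fun _ _ _ => by positivity
        obtain ⟨t, ht, rfl⟩ := mem_image.1 hb
        obtain ⟨⟨ht1, htM⟩, hgt⟩ := And.imp_left mem_Icc.1 (mem_filter.1 ht)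
        exact mem_Icc.2 ⟨Nat.div_pos (Nat.le_of_dvd ht1 hgt) hg, (Nat.div_le_self t g).trans htM⟩
    _ = harmonic M := by simp [harmonic_eq_sum_Icc]

theorem sum_sum_gcd_div_le (M : ℕ) :
    ∑ s ∈ Icc 1 M, ∑ t ∈ Icc 1 M, (Nat.gcd t s : ℝ) / t ≤ M * (1 + Real.log M) ^ 2 := by
  let f : ℕ → ℕ → ℕ → ℝ := fun g s t =>
    (if g ∣ s then 1 else 0) * (if g ∣ t then (g : ℝ) / t else 0)
  have hgcd : ∀ s ∈ Icc 1 M, ∀ t ∈ Icc 1 M, (Nat.gcd t s : ℝ) / t ≤ ∑ g ∈ Icc 1 M, f g s t := by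
    intro s hs t ht
    have hs := mem_Icc.1 hs; have ht := mem_Icc.1 ht
    have hmem : Nat.gcd t s ∈ Icc 1 M :=
      mem_Icc.2 ⟨Nat.gcd_pos_of_pos_left s (by omega), (Nat.gcd_le_left s (by omega)).trans ht.2⟩
    refine le_of_eq_of_le ?_ (single_le_sum (fun g _ => ?_) hmem)
    · simp [f, Nat.gcd_dvd_right, Nat.gcd_dvd_left]
    · simp only [f]; split_ifs <;> positivity
  calc ∑ s ∈ Icc 1 M, ∑ t ∈ Icc 1 M, (Nat.gcd t s : ℝ) / t
      ≤ ∑ s ∈ Icc 1 M, ∑ t ∈ Icc 1 M, ∑ g ∈ Icc 1 M, f g s t :=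
        sum_le_sum fun s hs => sum_le_sum fun t ht => hgcd s hs t ht
    _ = ∑ g ∈ Icc 1 M, (∑ s ∈ Icc 1 M, if g ∣ s then (1 : ℝ) else 0) *
          ∑ t ∈ Icc 1 M, if g ∣ t then (g : ℝ) / t else 0 := by
        simp_rw [sum_mul_sum]
        exact (sum_congr rfl fun s _ => sum_comm).trans sum_comm
    _ ≤ ∑ g ∈ Icc 1 M, ((M : ℝ) / g) * (1 + Real.log M) := by
        refine sum_le_sum fun g hg => mul_le_mul ?_ ?_ (sum_nonneg fun t _ => ?_) (by positivity)
        · rw [sum_boole]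
          exact le_of_eq_of_le (by rw [Nat.cast_inj]; exact Nat.Ioc_filter_dvd_card_eq_div M g)
            (Nat.cast_div_le)
        · rw [← sum_filter]
          exact sum_multiples_div_le_one_add_log M g
        · split_ifs <;> positivity
    _ = M * (1 + Real.log M) * harmonic M := by
        rw [harmonic_eq_sum_Icc, Rat.cast_sum, mul_sum, sum_congr rfl]
        intro g _
        push_cast
        ring
    _ ≤ M * (1 + Real.log M) ^ 2 := by
        rw [sq, ← mul_assoc]
        exact mul_le_mul_of_nonneg_left (harmonic_le_one_add_log M) (by positivity)

theorem Int.Icc_natCast_eq_map (a b : ℕ) : Icc (a : ℤ) b = (Icc a b).map Nat.castEmbedding := by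
  ext x
  simp only [mem_Icc, mem_map, Nat.castEmbedding_apply]
  constructor
  · intro h; exact ⟨x.toNat, by omega, by omega⟩
  · rintro ⟨n, hn, rfl⟩; omega

theorem sum_sum_intGcd_div_le (M : ℕ) :
    ∑ s ∈ Icc (1 : ℤ) M, ∑ t ∈ Icc (1 : ℤ) M, (Int.gcd t s : ℝ) / t ≤ M * (1 + Real.log M) ^ 2 := by
  rw [← Nat.cast_one, Int.Icc_natCast_eq_map]
  simpa [sum_map, Int.gcd_natCast_natCast] using sum_sum_gcd_div_le M

def mulCongrSolutions (p : ℕ) (A B : Finset ℤ) : Finset (ℤ × ℤ × ℤ × ℤ) :=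
  {t ∈ A ×ˢ B ×ˢ A ×ˢ B | (t.1 : ZMod p) * t.2.1 = t.2.2.1 * t.2.2.2}

theorem card_mulCongrSolutions_le {p M : ℕ} {a b : ℤ} (hab : a ≤ b) (hp : 2 * (b - a) * M < p)
    (hM : (M : ℤ) ≤ b - a + 1) :
    (#(mulCongrSolutions p (Icc a b) (Icc 1 M)) : ℝ) ≤
      2 * ((b : ℝ) - a + 1) * M * (1 + Real.log M) ^ 2 := by
  set I := Icc a b
  set K := Icc (1 : ℤ) M
  let pairs (q : ℤ × ℤ) : Finset (ℤ × ℤ) := {u ∈ I ×ˢ I | (u.1 : ZMod p) * q.1 = u.2 * q.2}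
  have hsub : mulCongrSolutions p I K ⊆
      (K ×ˢ K).biUnion fun q => (pairs q).image fun u => (u.1, q.1, u.2, q.2) := by
    intro t ht
    simp only [mulCongrSolutions, mem_filter, mem_product] at ht
    simp only [mem_biUnion, mem_image, mem_product, pairs, mem_filter]
    exact ⟨(t.2.1, t.2.2.2), ⟨ht.1.2.1, ht.1.2.2.2⟩, (t.1, t.2.2.1),
      ⟨⟨ht.1.1, ht.1.2.2.1⟩, ht.2⟩, rfl⟩
  have hcard : #(mulCongrSolutions p I K) ≤ ∑ q ∈ K ×ˢ K, #(pairs q) :=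
    (card_le_card hsub).trans (card_biUnion_le.trans (sum_le_sum fun q _ => card_image_le))
  have hH : 1 ≤ 1 + Real.log M := by linarith [Real.log_natCast_nonneg M]
  have hMR : (M : ℝ) ≤ b - a + 1 := by exact_mod_cast hM
  have hba : (0 : ℝ) ≤ b - a := by rw [sub_nonneg]; exact_mod_cast hab
  calc (#(mulCongrSolutions p I K) : ℝ) ≤ ∑ q ∈ K ×ˢ K, (#(pairs q) : ℝ) := by exact_mod_cast hcard
    _ ≤ ∑ q ∈ K ×ˢ K, (((b : ℝ) - a) * Int.gcd q.2 q.1 / q.2 + 1) :=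
        sum_le_sum fun q hq => card_filter_mul_eq_mul_le hab (mem_product.1 hq).1
          (mem_product.1 hq).2 hp
    _ = ((b : ℝ) - a) * (∑ s ∈ K, ∑ t ∈ K, (Int.gcd t s : ℝ) / t) + M * M := by
        simp [sum_product, sum_add_distrib, mul_sum, mul_div_assoc, K]
    _ ≤ ((b : ℝ) - a) * (M * (1 + Real.log M) ^ 2) + M * M := by
        gcongr; exact sum_sum_intGcd_div_le M
    _ ≤ 2 * ((b : ℝ) - a + 1) * M * (1 + Real.log M) ^ 2 := by
        have hH2 : 1 ≤ (1 + Real.log M) ^ 2 := by nlinarith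
        have hM0 : (0 : ℝ) ≤ M := M.cast_nonneg
        nlinarith [mul_le_mul_of_nonneg_left hMR hM0, mul_le_mul_of_nonneg_left hH2
          (mul_nonneg (by linarith : (0:ℝ) ≤ b - a + 1) hM0)]

theorem card_mulCongrSolutions_le_of_rpow_bounds {p : ℕ} (hp : 0 < p) {a b : ℤ}
    (hlo : (p : ℝ) ^ ((3 : ℝ) / 8) ≤ #(Icc a b))
    (hhi : (#(Icc a b) : ℝ) < (p : ℝ) ^ ((1 : ℝ) / 2)) :
    (#(mulCongrSolutions p (Icc a b) (Icc 1 ⌊(p : ℝ) ^ ((3 : ℝ) / 8) / 4⌋₊)) : ℝ) ≤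
      2 * (#(Icc a b) : ℝ) ^ 2 * (1 + Real.log p) ^ 2 := by
  set M := ⌊(p : ℝ) ^ ((3 : ℝ) / 8) / 4⌋₊
  have hp1 : (1 : ℝ) ≤ p := by exact_mod_cast hp
  have hq : 0 < (p : ℝ) ^ ((3 : ℝ) / 8) := by positivity
  have hab : a ≤ b := nonempty_Icc.1 (card_pos.1 (by exact_mod_cast hq.trans_le hlo))
  have hN : (#(Icc a b) : ℝ) = b - a + 1 := by
    have := Int.card_Icc_of_le a b (by omega); rw [← Int.cast_natCast, this]; push_cast; ring
  have hM : (M : ℝ) ≤ (p : ℝ) ^ ((3 : ℝ) / 8) / 4 := Nat.floor_le (by positivity)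
  have hMp : (M : ℝ) ≤ p := by
    have := Real.rpow_le_rpow_of_exponent_le hp1 (by norm_num : (3 : ℝ) / 8 ≤ 1)
    rw [Real.rpow_one] at this; linarith
  have h78 : (p : ℝ) ^ ((1 : ℝ) / 2) * (p : ℝ) ^ ((3 : ℝ) / 8) ≤ p := by
    rw [← Real.rpow_add (by positivity)]
    simpa using Real.rpow_le_rpow_of_exponent_le hp1 (by norm_num : (1 : ℝ) / 2 + 3 / 8 ≤ 1)
  have hprod : 2 * (b - a) * (M : ℤ) < p := by
    have hba : (0 : ℝ) ≤ b - a := by rw [sub_nonneg]; exact_mod_cast hab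
    have : ((2 * (b - a) * (M : ℤ) : ℤ) : ℝ) < p := by
      push_cast
      nlinarith [mul_le_mul hM (hN ▸ hhi).le (by positivity) (by positivity)]
    exact_mod_cast this
  have hlogM : 1 + Real.log M ≤ 1 + Real.log p := by
    rcases Nat.eq_zero_or_pos M with hM0 | hM0
    · simp [hM0, Real.log_natCast_nonneg]
    · gcongr
  calc (#(mulCongrSolutions p (Icc a b) (Icc 1 M)) : ℝ)
      ≤ 2 * ((b : ℝ) - a + 1) * M * (1 + Real.log M) ^ 2 :=
        card_mulCongrSolutions_le hab hprod (by
          have : (M : ℝ) ≤ b - a + 1 := by linarith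
          exact_mod_cast this)
    _ ≤ 2 * (#(Icc a b) : ℝ) ^ 2 * (1 + Real.log p) ^ 2 := by
        rw [← hN, sq (#(Icc a b) : ℝ), mul_assoc 2]
        have : (M : ℝ) ≤ #(Icc a b) := by linarith
        have : 0 ≤ 1 + Real.log M := by linarith [Real.log_natCast_nonneg M]
        gcongr
theorem sq_log_le_four_mul {x : ℝ} (hx : 1 ≤ x) : Real.log x ^ 2 ≤ 4 * x := by
  have h := Real.log_le_rpow_div (by linarith : 0 ≤ x) (by norm_num : (0 : ℝ) < 1 / 2)
  rw [← Real.sqrt_eq_rpow] at h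
  nlinarith [Real.log_nonneg hx, Real.sq_sqrt (by linarith : 0 ≤ x)]

theorem four_mul_one_add_log_pow_four_le_exp {x : ℝ} (hx : 8 < x) :
    4 * (1 + Real.log x) ^ 4 ≤ Real.exp (25 * Real.log x / Real.log (Real.log x)) := by
  set L := Real.log x
  have hL : 2 ≤ L := by
    rw [Real.le_log_iff_exp_le (by linarith)]
    have : Real.exp 2 = Real.exp 1 ^ 2 := by rw [← Real.exp_nat_mul]; norm_num
    nlinarith [Real.exp_one_lt_d9, Real.exp_pos 1]
  have hlogL : 0 < Real.log L := Real.log_pos (by linarith)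
  have hlogL' : Real.log L ≤ L := (Real.log_le_sub_one_of_pos (by linarith)).trans (by linarith)
  have hbound : Real.log (4 * (1 + L) ^ 4) ≤ 5 + 4 * Real.log L := by
    calc Real.log (4 * (1 + L) ^ 4) ≤ Real.log (2 ^ 6 * L ^ 4) :=
          Real.log_le_log (by positivity)
            (by nlinarith [pow_le_pow_left₀ (by linarith) (by linarith : 1 + L ≤ 2 * L) 4])
      _ = 6 * Real.log 2 + 4 * Real.log L := by
          rw [Real.log_mul (by positivity) (by positivity), Real.log_pow, Real.log_pow]
          push_cast
          ring
      _ ≤ 5 + 4 * Real.log L := by nlinarith [Real.log_two_lt_d9]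
  rw [← Real.exp_log (by positivity : 0 < 4 * (1 + L) ^ 4), Real.exp_le_exp, le_div_iff₀ hlogL]
  nlinarith [sq_log_le_four_mul (by linarith : (1 : ℝ) ≤ L)]

/-- multiplicative energy bound `E(R,T) ≤ exp(c log p / log log p) (|I||J|)²`
for `R = {(x − λ₁y, x − ω₂y, x − ω₃y) : x ∈ I, y ∈ J}` and
`T = {(x₀ − λ₁y₀, x₀ − ω₂y₀, x₀ − ω₃y₀) : x₀, y₀ ∈ I₀}` in
`F_p × F_{p²} × F_{p²}`, counted with multiplicity of coefficient tuples. -/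
theorem stmt8 :
    ∃ c : ℝ, 0 < c ∧ ∃ p₀ : ℕ, ∀ (p : ℕ) [Fact p.Prime], p₀ < p →
      ∀ (E : Type) [Field E] [Fintype E] [Algebra (ZMod p) E], Fintype.card E = p ^ 2 →
      ∀ (lam₁ lam₂ lam₃ : ZMod p) (ω₂ ω₃ : E),
        Irreducible (X ^ 2 + C lam₂ * X + C lam₃ : Polynomial (ZMod p)) →
        ω₂ ^ 2 + algebraMap (ZMod p) E lam₂ * ω₂ + algebraMap (ZMod p) E lam₃ = 0 →
        ω₃ ^ 2 + algebraMap (ZMod p) E lam₂ * ω₃ + algebraMap (ZMod p) E lam₃ = 0 →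
        ω₂ ≠ ω₃ →
      ∀ a₁ b₁ a₂ b₂ : ℤ,
        Finset.Icc a₁ b₁ ⊆ Finset.Icc 1 ((p : ℤ) - 1) →
        Finset.Icc a₂ b₂ ⊆ Finset.Icc 1 ((p : ℤ) - 1) →
        (p : ℝ) ^ ((3 : ℝ) / 8) ≤ ((Finset.Icc a₁ b₁).card : ℝ) →
        ((Finset.Icc a₁ b₁).card : ℝ) < (p : ℝ) ^ ((1 : ℝ) / 2) →
        (p : ℝ) ^ ((3 : ℝ) / 8) ≤ ((Finset.Icc a₂ b₂).card : ℝ) →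
        ((Finset.Icc a₂ b₂).card : ℝ) < (p : ℝ) ^ ((1 : ℝ) / 2) →
        (Nat.card {t : (ℤ × ℤ × ℤ × ℤ) × (ℤ × ℤ × ℤ × ℤ) //
            t.1.1 ∈ Finset.Icc a₁ b₁ ∧ t.1.2.1 ∈ Finset.Icc a₂ b₂ ∧
            t.1.2.2.1 ∈ Finset.Icc (1 : ℤ) ⌊(p : ℝ) ^ ((3 : ℝ) / 8) / 4⌋ ∧
            t.1.2.2.2 ∈ Finset.Icc (1 : ℤ) ⌊(p : ℝ) ^ ((3 : ℝ) / 8) / 4⌋ ∧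
            t.2.1 ∈ Finset.Icc a₁ b₁ ∧ t.2.2.1 ∈ Finset.Icc a₂ b₂ ∧
            t.2.2.2.1 ∈ Finset.Icc (1 : ℤ) ⌊(p : ℝ) ^ ((3 : ℝ) / 8) / 4⌋ ∧
            t.2.2.2.2 ∈ Finset.Icc (1 : ℤ) ⌊(p : ℝ) ^ ((3 : ℝ) / 8) / 4⌋ ∧
            -- μ = λ₁, in F_p
            ((t.1.1 : ZMod p) - lam₁ * (t.1.2.1 : ZMod p)) *
                ((t.1.2.2.1 : ZMod p) - lam₁ * (t.1.2.2.2 : ZMod p)) =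
              ((t.2.1 : ZMod p) - lam₁ * (t.2.2.1 : ZMod p)) *
                ((t.2.2.2.1 : ZMod p) - lam₁ * (t.2.2.2.2 : ZMod p)) ∧
            (t.1.1 : ZMod p) - lam₁ * (t.1.2.1 : ZMod p) ≠ 0 ∧
            (t.1.2.2.1 : ZMod p) - lam₁ * (t.1.2.2.2 : ZMod p) ≠ 0 ∧
            (t.2.1 : ZMod p) - lam₁ * (t.2.2.1 : ZMod p) ≠ 0 ∧
            (t.2.2.2.1 : ZMod p) - lam₁ * (t.2.2.2.2 : ZMod p) ≠ 0 ∧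
            -- μ = ω₂, in F_{p²}
            ((t.1.1 : E) - ω₂ * (t.1.2.1 : E)) * ((t.1.2.2.1 : E) - ω₂ * (t.1.2.2.2 : E)) =
              ((t.2.1 : E) - ω₂ * (t.2.2.1 : E)) * ((t.2.2.2.1 : E) - ω₂ * (t.2.2.2.2 : E)) ∧
            (t.1.1 : E) - ω₂ * (t.1.2.1 : E) ≠ 0 ∧
            (t.1.2.2.1 : E) - ω₂ * (t.1.2.2.2 : E) ≠ 0 ∧
            (t.2.1 : E) - ω₂ * (t.2.2.1 : E) ≠ 0 ∧
            (t.2.2.2.1 : E) - ω₂ * (t.2.2.2.2 : E) ≠ 0 ∧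
            -- μ = ω₃, in F_{p²}
            ((t.1.1 : E) - ω₃ * (t.1.2.1 : E)) * ((t.1.2.2.1 : E) - ω₃ * (t.1.2.2.2 : E)) =
              ((t.2.1 : E) - ω₃ * (t.2.2.1 : E)) * ((t.2.2.2.1 : E) - ω₃ * (t.2.2.2.2 : E)) ∧
            (t.1.1 : E) - ω₃ * (t.1.2.1 : E) ≠ 0 ∧
            (t.1.2.2.1 : E) - ω₃ * (t.1.2.2.2 : E) ≠ 0 ∧
            (t.2.1 : E) - ω₃ * (t.2.2.1 : E) ≠ 0 ∧
            (t.2.2.2.1 : E) - ω₃ * (t.2.2.2.2 : E) ≠ 0} : ℝ)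
          ≤ Real.exp (c * Real.log p / Real.log (Real.log p)) *
              (((Finset.Icc a₁ b₁).card : ℝ) * ((Finset.Icc a₂ b₂).card : ℝ)) ^ 2 := by
  refine ⟨25, by norm_num, 8, fun p _ hp E _ _ _ _ lam₁ lam₂ lam₃ ω₂ ω₃ hirr hω₂ _ _ a₁ b₁ a₂ b₂
    _ _ hI₁ hI₂ hJ₁ hJ₂ => ?_⟩
  rw [← Int.natCast_floor_eq_floor (by positivity)]
  set M := ⌊(p : ℝ) ^ ((3 : ℝ) / 8) / 4⌋₊
  set S₁ := mulCongrSolutions p (Icc a₁ b₁) (Icc 1 M)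
  set S₂ := mulCongrSolutions p (Icc a₂ b₂) (Icc 1 M)
  refine le_trans (b := ((#S₁ * #S₂ : ℕ) : ℝ)) (Nat.cast_le.2 ?_) ?_
  · rw [← card_product, ← Nat.card_eq_finsetCard]
    refine Nat.card_le_card_of_injective (fun t => ⟨((t.1.1.1, t.1.1.2.2.1, t.1.2.1, t.1.2.2.2.1),
      (t.1.1.2.1, t.1.1.2.2.2, t.1.2.2.1, t.1.2.2.2.2)), ?_⟩) fun t u h => ?_
    · obtain ⟨hx, hy, hx₀, hy₀, hx', hy', hx₀', hy₀', hl, -, -, -, -, hω, -⟩ := t.2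
      have key := mul_eq_mul_of_linearForm_products_eq hirr hω₂ lam₁ hl
        (by simpa only [map_intCast] using hω)
      simp only [mem_product, S₁, S₂, mulCongrSolutions, mem_filter]
      exact ⟨⟨⟨hx, hx₀, hx', hx₀'⟩, key.1⟩, ⟨hy, hy₀, hy', hy₀'⟩, key.2⟩
    · simp only [Subtype.mk.injEq, Prod.mk.injEq] at h
      ext <;> simp [h]
  push_cast
  calc (#S₁ : ℝ) * #S₂ ≤ (2 * (#(Icc a₁ b₁) : ℝ) ^ 2 * (1 + Real.log p) ^ 2) *
        (2 * (#(Icc a₂ b₂) : ℝ) ^ 2 * (1 + Real.log p) ^ 2) := by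
        gcongr
        · exact card_mulCongrSolutions_le_of_rpow_bounds (by omega) hI₁ hI₂
        · exact card_mulCongrSolutions_le_of_rpow_bounds (by omega) hJ₁ hJ₂
    _ = 4 * (1 + Real.log p) ^ 4 * ((#(Icc a₁ b₁) : ℝ) * #(Icc a₂ b₂)) ^ 2 := by ring
    _ ≤ _ := by gcongr; exact four_mul_one_add_log_pow_four_le_exp (by exact_mod_cast hp)
end

section
/- Let d ≥ 3 be an integer and set ρ''_d = (1460 − 1000d + √(1000000d² − 1960000d + 490000))/960. Then for all real numbers ρ and s with ρ > ρ''_d and s ≥ (6/5)ρ − 9/20, one has (d−1)ρ + (9 − 4ρ)/10 + ((4ρ + 1)/10)·s > d/2. -/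
/-- For d ≥ 3, ρ > ρ''_d and s ≥ (6/5)ρ − 9/20,
    (d−1)ρ + (9 − 4ρ)/10 + ((4ρ + 1)/10)·s > d/2. -/
theorem stmt12 (d : ℕ) (hd : 3 ≤ d) (ρ s : ℝ)
    (hρ : ρ > (1460 - 1000 * (d : ℝ) +
        Real.sqrt (1000000 * (d : ℝ) ^ 2 - 1960000 * (d : ℝ) + 490000)) / 960)
    (hs : s ≥ 6 / 5 * ρ - 9 / 20) :
    ((d : ℝ) - 1) * ρ + (9 - 4 * ρ) / 10 + (4 * ρ + 1) / 10 * s > (d : ℝ) / 2 := by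
  have hd3 : (3 : ℝ) ≤ (d : ℝ) := by exact_mod_cast hd
  set r := Real.sqrt (1000000 * (d : ℝ) ^ 2 - 1960000 * (d : ℝ) + 490000) with hr
  have hD : (0 : ℝ) ≤ 1000000 * (d : ℝ) ^ 2 - 1960000 * (d : ℝ) + 490000 := by
    nlinarith [sq_nonneg ((d : ℝ) - 1)]
  have hr2 : r ^ 2 = 1000000 * (d : ℝ) ^ 2 - 1960000 * (d : ℝ) + 490000 :=
    Real.sq_sqrt hD
  have hr0 : 0 ≤ r := Real.sqrt_nonneg _
  have hrub : r < 960 * ρ + 1000 * (d : ℝ) - 1460 := by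
    have := hρ
    nlinarith
  -- r > 1000 d - 1700, hence ρ > -1/4
  have hrlb : 1000 * (d : ℝ) - 1700 < r := by
    nlinarith [sq_nonneg (r - (1000 * (d : ℝ) - 1700))]
  have hρlb : -(1/4 : ℝ) < ρ := by nlinarith
  -- key quadratic inequality: 24ρ² + 50dρ − 73ρ − 25d + 171/4 > 0
  have hkey : 24 * ρ ^ 2 + 50 * (d : ℝ) * ρ - 73 * ρ - 25 * (d : ℝ) + 171 / 4 > 0 := by
    nlinarith [mul_pos (by linarith : (0:ℝ) < 960 * ρ + 1000 * (d : ℝ) - 1460 - r)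
      (by linarith : (0:ℝ) < 960 * ρ + 1000 * (d : ℝ) - 1460 + r)]
  nlinarith [mul_nonneg (by linarith : (0:ℝ) ≤ 4 * ρ + 1)
    (by linarith : (0:ℝ) ≤ s - (6 / 5 * ρ - 9 / 20)), hkey]
end
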